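/- Let H be a Hopf algebra over a field k. Define A : H → H ⊗ H by A(h) = Σ S(h₍₁₎) ⊗ h₍₂₎ − ε(h) 1 ⊗ 1. Then A is a gauge field (A(h) ∈ ker(m) for all h, and A(1) = 0) and it has zero curvature, i.e. it satisfies the Maurer–Cartan equation: for all h ∈ H, d(A(h)) + Σ A(h₍₁₎) ∧ A(h₍₂₎) = 0 in H ⊗ H ⊗ H. -/

import Mathlib

open TensorProduct

noncomputable section

variable {k H : Type*} [Field k] [Ring H] [HopfAlgebra k H]

/-- The exterior differential on universal 1-forms:
`d(a ⊗ b) = 1 ⊗ a ⊗ b − a ⊗ 1 ⊗ b + a ⊗ b ⊗ 1`. -/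
noncomputable def dOne : H ⊗[k] H →ₗ[k] H ⊗[k] (H ⊗[k] H) :=
  TensorProduct.mk k H (H ⊗[k] H) 1
    - LinearMap.lTensor H (TensorProduct.mk k H H 1)
    + LinearMap.lTensor H ((TensorProduct.mk k H H).flip 1)

/-- The wedge product of universal 1-forms: `(a ⊗ b) ∧ (c ⊗ d) = a ⊗ bc ⊗ d`. -/
noncomputable def wedge :
    (H ⊗[k] H) ⊗[k] (H ⊗[k] H) →ₗ[k] H ⊗[k] (H ⊗[k] H) :=
  LinearMap.lTensor H
      ((LinearMap.mul' k H).rTensor H ∘ₗ (TensorProduct.assoc k H H H).symm.toLinearMap)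
    ∘ₗ (TensorProduct.assoc k H H (H ⊗[k] H)).toLinearMap

/-- The gauge field `A(h) = Σ S(h₍₁₎) ⊗ h₍₂₎ − ε(h) 1 ⊗ 1`. -/
noncomputable def gaugeA : H →ₗ[k] H ⊗[k] H :=
  (HopfAlgebra.antipode (R := k) (A := H)).rTensor H ∘ₗ Coalgebra.comul
    - (Coalgebra.counit (R := k) (A := H)).smulRight ((1 : H) ⊗ₜ[k] (1 : H))

/-! Write `A = β − γ` with `β(h) = Σ S(h₍₁₎) ⊗ h₍₂₎` (`antipodeComul`) and
`γ(h) = ε(h) 1 ⊗ 1`. By the counit axioms, `Σ β(h₍₁₎) ∧ γ(h₍₂₎)` and `Σ γ(h₍₁₎) ∧ β(h₍₂₎)`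
are the last and the first term of `d(β(h))`, and
`Σ γ(h₍₁₎) ∧ γ(h₍₂₎) = ε(h) 1 ⊗ 1 ⊗ 1 = d(γ(h))`. By coassociativity and the antipode axiom,
`Σ β(h₍₁₎) ∧ β(h₍₂₎) = Σ S(h₍₁₎) ⊗ h₍₂₎S(h₍₃₎) ⊗ h₍₄₎ = Σ S(h₍₁₎) ⊗ 1 ⊗ h₍₂₎`, the middle term
of `d(β(h))` up to sign. So all terms cancel. -/

open Coalgebra HopfAlgebra

theorem TensorProduct.map_sub_sub {R M N P Q : Type*} [CommRing R]
    [AddCommGroup M] [AddCommGroup N] [AddCommGroup P] [AddCommGroup Q]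
    [Module R M] [Module R N] [Module R P] [Module R Q]
    (f f' : M →ₗ[R] P) (g g' : N →ₗ[R] Q) :
    map (f - f') (g - g') = map f g - map f g' - map f' g + map f' g' := by
  simp only [← mapBilinear_apply, map_sub, LinearMap.sub_apply]
  abel

section Coalgebra

variable {R C M N : Type*} [CommSemiring R] [AddCommMonoid C] [Module R C] [Coalgebra R C]
  [AddCommMonoid M] [Module R M] [AddCommMonoid N] [Module R N]

theorem map_smulRight_counit_comul (m : M) (g : C →ₗ[R] N) (c : C) :
    map (counit.smulRight m) g (comul c) = m ⊗ₜ g c := by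
  have : map (counit.smulRight m) g =
      map (LinearMap.toSpanSingleton R M m) g ∘ₗ (counit (R := R) (A := C)).rTensor C := by
    rw [LinearMap.map_comp_rTensor]; rfl
  rw [this, LinearMap.comp_apply, rTensor_counit_comul, map_tmul]
  simp

theorem map_comul_smulRight_counit (f : C →ₗ[R] M) (n : N) (c : C) :
    map f (counit.smulRight n) (comul c) = f c ⊗ₜ n := by
  have : map f (counit.smulRight n) =
      map f (LinearMap.toSpanSingleton R N n) ∘ₗ (counit (R := R) (A := C)).lTensor C := by
    rw [LinearMap.map_comp_lTensor]; rfl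
  rw [this, LinearMap.comp_apply, lTensor_counit_comul, map_tmul]
  simp

end Coalgebra

section HopfAlgebra

variable {R A : Type*} [CommSemiring R] [Semiring A] [HopfAlgebra R A]

variable (R A) in
def antipodeComul : A →ₗ[R] A ⊗[R] A := (antipode R).rTensor A ∘ₗ comul

variable (R A) in
def mulLeftTensor : A ⊗[R] (A ⊗[R] A) →ₗ[R] A ⊗[R] A :=
  (LinearMap.mul' R A).rTensor A ∘ₗ (TensorProduct.assoc R A A A).symm.toLinearMap

@[simp]
theorem mulLeftTensor_tmul (a b c : A) :
    mulLeftTensor R A (a ⊗ₜ (b ⊗ₜ c)) = (a * b) ⊗ₜ c := by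
  simp [mulLeftTensor]

theorem mulLeftTensor_lTensor_antipodeComul_comul (a : A) :
    mulLeftTensor R A ((antipodeComul R A).lTensor A (comul a)) = 1 ⊗ₜ a := by
  have h := LinearMap.congr_fun (LinearMap.lTensor_rTensor_comp_assoc A (P := A) (Q := A)
    (antipode R (A := A))) ((comul (R := R) (A := A)).rTensor A (comul a))
  simp only [LinearMap.comp_apply, LinearEquiv.coe_coe, coassoc_apply] at h
  rw [antipodeComul, LinearMap.lTensor_comp_apply, h, mulLeftTensor, LinearMap.comp_apply,
    LinearEquiv.coe_coe, LinearEquiv.symm_apply_apply, ← LinearMap.rTensor_comp_apply,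
    ← LinearMap.rTensor_comp_apply, LinearMap.comp_assoc, mul_antipode_lTensor_comul]
  simp [LinearMap.rTensor_comp_apply, Algebra.algebraMap_eq_smul_one]

end HopfAlgebra

section GaugeField

theorem wedge_eq :
    wedge (k := k) (H := H) =
      (mulLeftTensor k H).lTensor H ∘ₗ (TensorProduct.assoc k H H (H ⊗[k] H)).toLinearMap :=
  rfl

@[simp]
theorem wedge_tmul (a b c d : H) :
    wedge ((a ⊗ₜ[k] b) ⊗ₜ[k] (c ⊗ₜ[k] d)) = a ⊗ₜ[k] ((b * c) ⊗ₜ[k] d) := by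
  simp [wedge_eq]

theorem wedge_one_tmul_one_tmul (x : H ⊗[k] H) :
    wedge (((1 : H) ⊗ₜ[k] (1 : H)) ⊗ₜ[k] x) = (1 : H) ⊗ₜ[k] x := by
  induction x using TensorProduct.induction_on with
  | zero => simp
  | tmul c d => simp
  | add x y hx hy => rw [tmul_add, map_add, hx, hy, tmul_add]

theorem wedge_tmul_one_tmul_one (x : H ⊗[k] H) :
    wedge (x ⊗ₜ[k] ((1 : H) ⊗ₜ[k] (1 : H))) = ((TensorProduct.mk k H H).flip 1).lTensor H x := by
  induction x using TensorProduct.induction_on with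
  | zero => simp
  | tmul a b => simp
  | add x y hx hy => rw [add_tmul, map_add, hx, hy, map_add]

theorem wedge_map_antipodeComul_comul (h : H) :
    wedge (map (antipodeComul k H) (antipodeComul k H) (comul h)) =
      (TensorProduct.mk k H H 1).lTensor H (antipodeComul k H h) := by
  have split_comul : map (antipodeComul k H) (antipodeComul k H) =
      map (map (antipode k) LinearMap.id) (antipodeComul k H) ∘ₗ
        (comul (R := k) (A := H)).rTensor H := by
    rw [LinearMap.map_comp_rTensor]; rfl
  have cancel : (mulLeftTensor k H ∘ₗ (antipodeComul k H).lTensor H) ∘ₗ comul =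
      TensorProduct.mk k H H 1 :=
    LinearMap.ext mulLeftTensor_lTensor_antipodeComul_comul
  calc wedge (map (antipodeComul k H) (antipodeComul k H) (comul h))
      = (mulLeftTensor k H).lTensor H
          (map (antipode k) ((antipodeComul k H).lTensor H)
            ((comul (R := k)).lTensor H (comul h))) := by
        rw [split_comul, wedge_eq, LinearMap.comp_apply, LinearMap.comp_apply,
          LinearEquiv.coe_coe, ← map_map_assoc, coassoc_apply]
        rfl
    _ = map (antipode k) (TensorProduct.mk k H H 1) (comul h) := by
        rw [← LinearMap.comp_apply (g := map _ _),
          ← LinearMap.comp_apply (g := LinearMap.lTensor _ _),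
          LinearMap.lTensor_comp_map, LinearMap.map_comp_lTensor, cancel]
    _ = (TensorProduct.mk k H H 1).lTensor H (antipodeComul k H h) := by
        rw [antipodeComul, LinearMap.comp_apply,
          ← LinearMap.comp_apply (g := LinearMap.rTensor _ _),
          LinearMap.lTensor_comp_rTensor]

theorem dOne_apply (x : H ⊗[k] H) :
    dOne x = (1 : H) ⊗ₜ[k] x - (TensorProduct.mk k H H 1).lTensor H x
      + ((TensorProduct.mk k H H).flip 1).lTensor H x :=
  rfl

theorem gaugeA_eq :
    gaugeA (k := k) (H := H) = antipodeComul k H - counit.smulRight ((1 : H) ⊗ₜ[k] (1 : H)) :=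
  rfl

theorem mul'_gaugeA (h : H) : LinearMap.mul' k H (gaugeA (k := k) (H := H) h) = 0 := by
  simp [gaugeA, Algebra.smul_def]

theorem gaugeA_one : gaugeA (k := k) (H := H) 1 = 0 := by
  simp [gaugeA, Algebra.TensorProduct.one_def]

theorem dOne_gaugeA_add_wedge_map_gaugeA_comul (h : H) :
    dOne (gaugeA (k := k) (H := H) h) + wedge (map gaugeA gaugeA (comul (R := k) h)) = 0 := by
  rw [gaugeA_eq, TensorProduct.map_sub_sub]
  simp only [LinearMap.sub_apply, LinearMap.add_apply, map_sub, map_add,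
    map_smulRight_counit_comul, map_comul_smulRight_counit, wedge_map_antipodeComul_comul,
    wedge_one_tmul_one_tmul, wedge_tmul_one_tmul_one, dOne_apply, LinearMap.smulRight_apply,
    map_smul, LinearMap.lTensor_tmul, TensorProduct.mk_apply]
  module

end GaugeField

/-- `A(h) = Σ S(h₍₁₎) ⊗ h₍₂₎ − ε(h) 1 ⊗ 1` is a gauge field (`A(h) ∈ ker m`,
`A(1) = 0`) with zero curvature: `d(A(h)) + Σ A(h₍₁₎) ∧ A(h₍₂₎) = 0` for all `h`. -/
theorem statement5 :
    (∀ h : H, LinearMap.mul' k H (gaugeA (k := k) (H := H) h) = 0)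
    ∧ gaugeA (k := k) (H := H) 1 = 0
    ∧ (∀ h : H,
        dOne (gaugeA (k := k) (H := H) h)
          + wedge ((TensorProduct.map gaugeA gaugeA) (Coalgebra.comul (R := k) h)) = 0) :=
  ⟨mul'_gaugeA, gaugeA_one, dOne_gaugeA_add_wedge_map_gaugeA_comul⟩
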